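/- Let Ω ⊂ ℝ^d be a bounded measurable set, let Y = [0,1]^d, and let ϕ : ℝ^d × ℝ^d → ℝ be continuous, with ϕ(x, ·) being Y-periodic in its second argument for every x (i.e. ϕ(x, y + k) = ϕ(x, y) for all k ∈ ℤ^d), and with ϕ bounded on Ω × ℝ^d. Then lim_{ε→0⁺} ∫_Ω ϕ(x, x/ε) dx = ∫_Ω ∫_Y ϕ(x, y) dy dx. -/

import Mathlib

/-!
Since `y ↦ ϕ x y` is `ℤ^d`-periodic, its integral over `Y = [0,1]^d` equals its integral over the
translated cell `ε⁻¹ • x + Y`, so by Fubini the limit is `∫_Y ∫_Ω ϕ(x, ε⁻¹ • x + τ) dx dτ`.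
For fixed `τ`, the substitution `u = x + ε • τ` turns the inner integral into
`∫_{Ω + ε • τ} ϕ(u - ε • τ, ε⁻¹ • u) du`, which differs from `∫_Ω ϕ(u, ε⁻¹ • u) du` by at most
`|Ω| ω(ε) + M |(Ω + ε • τ) ∆ Ω|`. Here `ω` is a modulus of continuity of `ϕ` in `x`, uniform in `y`
(periodicity reduces this to uniform continuity on the compact set `closure Ω × Y`), and the
measure of the symmetric difference tends to `0` by continuity of translation on sets of finite
measure.
-/

open MeasureTheory Filter Set Pointwise Topology
open scoped symmDiff

theorem tendsto_of_forall_eventually_abs_sub_le {α : Type*} {l : Filter α} {f : α → ℝ} {a C : ℝ}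
    (h : ∀ δ > 0, ∀ᶠ x in l, |f x - a| ≤ C * δ) : Tendsto f l (𝓝 a) := by
  rw [Metric.tendsto_nhds]
  intro e he
  have hC : 0 < |C| + 1 := by positivity
  filter_upwards [h (e / (|C| + 1)) (div_pos he hC)] with x hx
  rw [Real.dist_eq]
  calc |f x - a| ≤ C * (e / (|C| + 1)) := hx
    _ ≤ |C| * (e / (|C| + 1)) := by gcongr; exact le_abs_self C
    _ < e := by rw [mul_div_assoc', div_lt_iff₀ hC]; linarith

def IntLatticePeriodic {d : ℕ} {α : Type*} (f : (Fin d → ℝ) → α) : Prop :=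
  ∀ (y : Fin d → ℝ) (k : Fin d → ℤ), f (y + fun i => (k i : ℝ)) = f y

namespace IntLatticePeriodic

variable {d : ℕ} {α : Type*} {f : (Fin d → ℝ) → α}

theorem apply_fract (hf : IntLatticePeriodic f) (y : Fin d → ℝ) :
    f (fun i => Int.fract (y i)) = f y := by
  rw [← hf _ (fun i => ⌊y i⌋)]
  congr 1
  funext i
  exact Int.fract_add_floor (y i)

theorem fract_mem_unitCube (y : Fin d → ℝ) :
    (fun i => Int.fract (y i)) ∈ Icc (0 : Fin d → ℝ) 1 :=
  ⟨fun i => Int.fract_nonneg (y i), fun i => (Int.fract_lt_one (y i)).le⟩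

theorem setIntegral_unitCube_add {E : Type*} [NormedAddCommGroup E] [NormedSpace ℝ E]
    {f : (Fin d → ℝ) → E} (hf : IntLatticePeriodic f) (c : Fin d → ℝ) :
    ∫ y in Icc (0 : Fin d → ℝ) 1, f (c + y) = ∫ y in Icc (0 : Fin d → ℝ) 1, f y := by
  set b := Pi.basisFun ℝ (Fin d)
  set L := (Submodule.span ℤ (range b)).toAddSubgroup
  set D := ZSpan.fundamentalDomain b
  have : Countable L := inferInstanceAs (Countable (Submodule.span ℤ (range b)))
  have hD : IsAddFundamentalDomain L D := ZSpan.isAddFundamentalDomain' b volume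
  have hD_ae : D =ᵐ[volume] Icc 0 1 := by
    rw [show D = _ from ZSpan.fundamentalDomain_pi_basisFun, volume_pi]
    exact Measure.univ_pi_Ico_ae_eq_Icc
  have hfL : ∀ (g : L) (y : Fin d → ℝ), f (g +ᵥ y) = f y := by
    rintro ⟨g, hg⟩ y
    obtain ⟨k, rfl⟩ : ∃ k : Fin d → ℤ, (fun i => (k i : ℝ)) = g := by
      choose k hk using (b.mem_span_iff_repr_mem ℤ g).1 hg
      exact ⟨k, funext fun i => by simpa [b] using hk i⟩
    change f (_ + y) = f y
    rw [add_comm]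
    exact hf y k
  have hpre : (c + ·) ⁻¹' (c +ᵥ D) = D := by
    ext y
    simp [mem_vadd_set_iff_neg_vadd_mem]
  calc ∫ y in Icc 0 1, f (c + y)
      = ∫ y in c +ᵥ D, f y := by
        rw [setIntegral_congr_set hD_ae.symm]
        conv_lhs => rw [← hpre]
        exact (measurePreserving_add_left volume c).setIntegral_preimage_emb
          (measurableEmbedding_addLeft c) f _
    _ = ∫ y in Icc 0 1, f y := by
        rw [(hD.vadd_of_comm c).setIntegral_eq hD hfL, setIntegral_congr_set hD_ae]

end IntLatticePeriodic

theorem tendsto_measureReal_preimage_sub_symmDiff {G : Type*} [AddGroup G] [TopologicalSpace G]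
    [IsTopologicalAddGroup G] [MeasurableSpace G] [BorelSpace G] {μ : Measure G}
    [μ.IsAddRightInvariant] [μ.InnerRegularCompactLTTop] [IsLocallyFiniteMeasure μ] {s : Set G}
    (hs : MeasurableSet s) (hμs : μ s ≠ ⊤) :
    Tendsto (fun t => μ.real (((· - t) ⁻¹' s) ∆ s)) (𝓝 0) (𝓝 0) := by
  let shift : C(G, C(G, G)) := ContinuousMap.curry ⟨fun p : G × G => p.2 - p.1, by fun_prop⟩
  have h := tendsto_measure_symmDiff_preimage_nhds_zero (μ := μ) (shift.continuous.tendsto 0)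
    (.of_forall fun t => measurePreserving_sub_right μ t) (measurePreserving_sub_right μ 0)
    hs.nullMeasurableSet hμs
  have h0 : shift 0 ⁻¹' s = s := by ext; simp [shift]
  rw [h0] at h
  exact (ENNReal.tendsto_toReal ENNReal.zero_ne_top).comp h

theorem abs_setIntegral_sub_setIntegral_add_le {G Y : Type*} [AddGroup G] [TopologicalSpace G]
    [IsTopologicalAddGroup G] [MeasurableSpace G] [BorelSpace G] [TopologicalSpace Y]
    {μ : Measure G} [μ.IsAddRightInvariant] {Ω : Set G} (hΩ : MeasurableSet Ω) (hμΩ : μ Ω ≠ ⊤)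
    {ϕ : G → Y → ℝ} (hϕ : Continuous (Function.uncurry ϕ)) {g : G → Y} (hg : Continuous g)
    {M δ : ℝ} (hM : ∀ x ∈ Ω, ∀ y, |ϕ x y| ≤ M) (hδ : 0 ≤ δ) {t : G}
    (hshift : ∀ x ∈ Ω, x - t ∈ Ω → ∀ y, |ϕ x y - ϕ (x - t) y| ≤ δ) :
    |∫ x in Ω, ϕ x (g x) ∂μ - ∫ x in Ω, ϕ x (g (x + t)) ∂μ| ≤
      δ * μ.real Ω + M * μ.real (((· - t) ⁻¹' Ω) ∆ Ω) := by
  set Ωt := (· - t) ⁻¹' Ω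
  have hΩt : MeasurableSet Ωt := measurable_sub_const t hΩ
  have hμΩt : μ Ωt ≠ ⊤ := by
    rwa [(measurePreserving_sub_right μ t).measure_preimage hΩ.nullMeasurableSet]
  have h_shift : ∫ x in Ω, ϕ x (g (x + t)) ∂μ = ∫ u in Ωt, ϕ (u - t) (g u) ∂μ := by
    simpa using ((measurePreserving_sub_right μ t).setIntegral_preimage_emb
      (measurableEmbedding_subRight t) (fun x => ϕ x (g (x + t))) Ω).symm
  have hint : IntegrableOn (fun x => ϕ x (g x)) Ω μ :=
    Measure.integrableOn_of_bounded (M := M) hμΩ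
      (hϕ.comp (continuous_id.prodMk hg)).aestronglyMeasurable
      ((ae_restrict_iff' hΩ).2 (.of_forall fun x hx => hM x hx (g x)))
  have hint_t : IntegrableOn (fun u => ϕ (u - t) (g u)) Ωt μ :=
    Measure.integrableOn_of_bounded (M := M) hμΩt
      (hϕ.comp ((continuous_sub_right t).prodMk hg)).aestronglyMeasurable
      ((ae_restrict_iff' hΩt).2 (.of_forall fun u hu => hM (u - t) hu (g u)))
  have hbound : ∀ u,
      ‖Ω.indicator (fun x => ϕ x (g x)) u - Ωt.indicator (fun u => ϕ (u - t) (g u)) u‖ ≤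
        Ω.indicator (fun _ => δ) u + (Ωt ∆ Ω).indicator (fun _ => M) u := by
    intro u
    by_cases hu : u ∈ Ω <;> by_cases hut : u ∈ Ωt
    · simpa [mem_symmDiff, hu, hut] using hshift u hu hut _
    · simpa [mem_symmDiff, hu, hut] using (hM u hu (g u)).trans (le_add_of_nonneg_left hδ)
    · simpa [mem_symmDiff, hu, hut] using hM (u - t) hut (g u)
    · simp [mem_symmDiff, hu, hut]
  have hδ_int : Integrable (Ω.indicator fun _ => δ) μ :=
    (integrableOn_const hμΩ).integrable_indicator hΩ
  have hM_int : Integrable ((Ωt ∆ Ω).indicator fun _ => M) μ :=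
    (integrableOn_const (measure_symmDiff_ne_top hμΩt hμΩ)).integrable_indicator
      (hΩt.symmDiff hΩ)
  calc |∫ x in Ω, ϕ x (g x) ∂μ - ∫ x in Ω, ϕ x (g (x + t)) ∂μ|
      = ‖∫ u, (Ω.indicator (fun x => ϕ x (g x)) u -
          Ωt.indicator (fun u => ϕ (u - t) (g u)) u) ∂μ‖ := by
        rw [h_shift, ← integral_indicator hΩ, ← integral_indicator hΩt, Real.norm_eq_abs,
          integral_sub (hint.integrable_indicator hΩ) (hint_t.integrable_indicator hΩt)]
    _ ≤ ∫ u, (Ω.indicator (fun _ => δ) u + (Ωt ∆ Ω).indicator (fun _ => M) u) ∂μ :=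
        norm_integral_le_of_norm_le (hδ_int.add hM_int) (.of_forall hbound)
    _ = δ * μ.real Ω + M * μ.real (Ωt ∆ Ω) := by
        rw [integral_add hδ_int hM_int, integral_indicator_const _ hΩ,
          integral_indicator_const _ (hΩt.symmDiff hΩ), smul_eq_mul, smul_eq_mul, mul_comm,
          mul_comm M]

variable {d : ℕ}

theorem norm_le_one_of_mem_unitCube {τ : Fin d → ℝ} (hτ : τ ∈ Icc (0 : Fin d → ℝ) 1) :
    ‖τ‖ ≤ 1 :=
  (pi_norm_le_iff_of_nonneg zero_le_one).2 fun i =>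
    (Real.norm_of_nonneg (hτ.1 i)).trans_le (hτ.2 i)

theorem exists_pos_forall_dist_lt_of_intLatticePeriodic {X Z : Type*} [PseudoMetricSpace X]
    [PseudoMetricSpace Z] {ϕ : X → (Fin d → ℝ) → Z} (hcont : Continuous (Function.uncurry ϕ))
    (hper : ∀ x, IntLatticePeriodic (ϕ x)) {K : Set X} (hK : IsCompact K) {δ : ℝ} (hδ : 0 < δ) :
    ∃ η > 0, ∀ x ∈ K, ∀ x' ∈ K, dist x x' < η → ∀ y, dist (ϕ x y) (ϕ x' y) < δ := by
  obtain ⟨η, hη, hϕ⟩ := Metric.uniformContinuousOn_iff.1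
    ((hK.prod isCompact_Icc).uniformContinuousOn_of_continuous hcont.continuousOn) δ hδ
  refine ⟨η, hη, fun x hx x' hx' hxx' y => ?_⟩
  have hy := IntLatticePeriodic.fract_mem_unitCube y
  rw [← (hper x).apply_fract, ← (hper x').apply_fract]
  exact hϕ (x, _) ⟨hx, hy⟩ (x', _) ⟨hx', hy⟩ (by simpa [Prod.dist_eq, hη])

theorem volume_unitCube : volume (Icc (0 : Fin d → ℝ) 1) = 1 := by
  simp [Real.volume_Icc_pi]

section Translates

variable {Ω : Set (Fin d → ℝ)} {ϕ : (Fin d → ℝ) → (Fin d → ℝ) → ℝ} {M : ℝ}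

theorem integrable_translates (hΩ : MeasurableSet Ω) (hμΩ : volume Ω ≠ ⊤)
    (hcont : Continuous (Function.uncurry ϕ)) (hM : ∀ x ∈ Ω, ∀ y, |ϕ x y| ≤ M)
    {g : (Fin d → ℝ) → Fin d → ℝ} (hg : Continuous g) :
    Integrable (Function.uncurry fun x τ => ϕ x (g x + τ))
      ((volume.restrict Ω).prod (volume.restrict (Icc 0 1))) := by
  rw [Measure.prod_restrict]
  refine Measure.integrableOn_of_bounded (M := M) ?_ ?_ ?_
  · rw [Measure.prod_prod, volume_unitCube, mul_one]
    exact hμΩ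
  · exact (hcont.comp (continuous_fst.prodMk
      ((hg.comp continuous_fst).add continuous_snd))).aestronglyMeasurable
  · exact (ae_restrict_iff' (hΩ.prod measurableSet_Icc)).2
      (.of_forall fun p hp => hM p.1 hp.1 _)

theorem setIntegral_cellAverage_eq_setIntegral_translates (hΩ : MeasurableSet Ω)
    (hμΩ : volume Ω ≠ ⊤) (hcont : Continuous (Function.uncurry ϕ))
    (hper : ∀ x, IntLatticePeriodic (ϕ x)) (hM : ∀ x ∈ Ω, ∀ y, |ϕ x y| ≤ M)
    {g : (Fin d → ℝ) → Fin d → ℝ} (hg : Continuous g) :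
    ∫ x in Ω, ∫ y in Icc 0 1, ϕ x y = ∫ τ in Icc 0 1, ∫ x in Ω, ϕ x (g x + τ) := by
  rw [← integral_integral_swap (integrable_translates hΩ hμΩ hcont hM hg)]
  exact integral_congr_ae (.of_forall fun x => ((hper x).setIntegral_unitCube_add (g x)).symm)

theorem abs_setIntegral_oscillating_sub_cellAverage_le (hΩ : MeasurableSet Ω)
    (hμΩ : volume Ω ≠ ⊤) (hcont : Continuous (Function.uncurry ϕ))
    (hper : ∀ x, IntLatticePeriodic (ϕ x)) (hM : ∀ x ∈ Ω, ∀ y, |ϕ x y| ≤ M) (hM₀ : 0 ≤ M)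
    {δ δ' ε : ℝ} (hδ : 0 ≤ δ) (hε : ε ≠ 0)
    (hshift : ∀ τ ∈ Icc (0 : Fin d → ℝ) 1, ∀ x ∈ Ω, x - ε • τ ∈ Ω → ∀ y,
      |ϕ x y - ϕ (x - ε • τ) y| ≤ δ)
    (hsymm : ∀ τ ∈ Icc (0 : Fin d → ℝ) 1, volume.real (((· - ε • τ) ⁻¹' Ω) ∆ Ω) ≤ δ') :
    |(∫ x in Ω, ϕ x (ε⁻¹ • x)) - ∫ x in Ω, ∫ y in Icc 0 1, ϕ x y| ≤
      δ * volume.real Ω + M * δ' := by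
  have hg : Continuous fun x : Fin d → ℝ => ε⁻¹ • x := continuous_const_smul ε⁻¹
  have hY : volume (Icc (0 : Fin d → ℝ) 1) < ⊤ := by
    rw [volume_unitCube]
    exact ENNReal.one_lt_top
  have hconst : ∫ x in Ω, ϕ x (ε⁻¹ • x) =
      ∫ _ in Icc (0 : Fin d → ℝ) 1, ∫ x in Ω, ϕ x (ε⁻¹ • x) := by
    simp [Measure.real, volume_unitCube]
  have : IsFiniteMeasure (volume.restrict (Icc (0 : Fin d → ℝ) 1)) :=
    isFiniteMeasure_restrict.2 hY.ne
  have hJ : Integrable (fun τ => ∫ x in Ω, ϕ x (ε⁻¹ • x + τ)) (volume.restrict (Icc 0 1)) :=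
    (integrable_translates hΩ hμΩ hcont hM hg).integral_prod_right
  rw [setIntegral_cellAverage_eq_setIntegral_translates hΩ hμΩ hcont hper hM hg, hconst,
    ← integral_sub (integrable_const _) hJ, ← Real.norm_eq_abs]
  refine (norm_setIntegral_le_of_norm_le_const (C := δ * volume.real Ω + M * δ') hY
    fun τ hτ => ?_).trans_eq (by simp [Measure.real, volume_unitCube])
  have h := abs_setIntegral_sub_setIntegral_add_le hΩ hμΩ hcont hg hM hδ (hshift τ hτ)
  simp only [smul_add, smul_smul, inv_mul_cancel₀ hε, one_smul] at h
  exact h.trans (by gcongr; exact hsymm τ hτ)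

end Translates

/-- Averaging of rapidly oscillating periodic functions (two-scale limit of an
admissible oscillating test function is its cell average): for `Ω ⊆ ℝ^d` bounded
and measurable and `ϕ(x,y)` continuous, `Y`-periodic in `y` (`Y = [0,1]^d`), and
bounded on `Ω × ℝ^d`,
`∫_Ω ϕ(x, x/ε) dx → ∫_Ω ∫_Y ϕ(x,y) dy dx` as `ε → 0⁺`. -/
theorem oscillating_average_tendsto_cell_average
    (d : ℕ) (Ω : Set (Fin d → ℝ)) (hΩmeas : MeasurableSet Ω)
    (hΩbd : Bornology.IsBounded Ω)
    (ϕ : (Fin d → ℝ) → (Fin d → ℝ) → ℝ)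
    (hcont : Continuous (Function.uncurry ϕ))
    (hper : ∀ (x y : Fin d → ℝ) (k : Fin d → ℤ),
      ϕ x (y + fun i => (k i : ℝ)) = ϕ x y)
    (Cb : ℝ) (hbd : ∀ x ∈ Ω, ∀ y : Fin d → ℝ, |ϕ x y| ≤ Cb) :
    Tendsto (fun ε : ℝ => ∫ x in Ω, ϕ x (ε⁻¹ • x))
      (nhdsWithin 0 (Set.Ioi 0))
      (nhds (∫ x in Ω, ∫ y in Set.Icc (0 : Fin d → ℝ) 1, ϕ x y)) := by
  have hμΩ : volume Ω ≠ ⊤ := hΩbd.measure_lt_top.ne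
  have hM : ∀ x ∈ Ω, ∀ y, |ϕ x y| ≤ |Cb| := fun x hx y => (hbd x hx y).trans (le_abs_self Cb)
  refine tendsto_of_forall_eventually_abs_sub_le (C := volume.real Ω + |Cb|) fun δ hδ => ?_
  obtain ⟨η₁, hη₁, hunif⟩ :=
    exists_pos_forall_dist_lt_of_intLatticePeriodic hcont hper hΩbd.isCompact_closure hδ
  obtain ⟨η₂, hη₂, hsymm⟩ := Metric.eventually_nhds_iff.1
    ((tendsto_measureReal_preimage_sub_symmDiff hΩmeas hμΩ).eventually (ge_mem_nhds hδ))
  filter_upwards [Ioo_mem_nhdsGT (lt_min hη₁ hη₂)] with ε ⟨hε, hεη⟩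
  have hsmall : ∀ τ ∈ Icc (0 : Fin d → ℝ) 1, ‖ε • τ‖ < min η₁ η₂ := fun τ hτ => by
    rw [norm_smul, Real.norm_of_nonneg hε.le]
    exact (mul_le_of_le_one_right hε.le (norm_le_one_of_mem_unitCube hτ)).trans_lt hεη
  calc _ ≤ δ * volume.real Ω + |Cb| * δ :=
        abs_setIntegral_oscillating_sub_cellAverage_le hΩmeas hμΩ hcont hper hM (abs_nonneg Cb)
          hδ.le hε.ne'
          (fun τ hτ x hx hxt y => (hunif x (subset_closure hx) _ (subset_closure hxt)
            (by simpa using (hsmall τ hτ).trans_le (min_le_left _ _)) y).le)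
          (fun τ hτ => hsymm (by simpa using (hsmall τ hτ).trans_le (min_le_right _ _)))
    _ = (volume.real Ω + |Cb|) * δ := by ring
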